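/- Let n≥3 be odd and let (G,φ) be a C_n-tight graph containing a vertex v that is incident to exactly two elements of E∪L, i.e. either two edges, or one edge and one loop. Let γ be a generator of Γ=ℤ/nℤ. Then the graph G∖{φ(γ)^i v : 0≤i≤n−1} obtained by deleting the full vertex orbit of v together with all incident edges and loops, with the induced Γ-action, is C_n-tight. -/

import Mathlib

open Finset
open scoped Classical

/-- A looped simple graph `G = (V, E, L)`: a finite vertex set `vs`, a finite set `es` of
edges (unordered pairs of distinct vertices of `vs`, no multiple edges) and a finite set `ls`
of loops, each loop `l` being incident to the vertex `loopAt l ∈ vs`. -/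
structure LGraph (V L : Type) where
  vs : Finset V
  es : Finset (Sym2 V)
  ls : Finset L
  loopAt : L → V
  es_not_diag : ∀ e ∈ es, ¬ e.IsDiag
  es_mem : ∀ e ∈ es, ∀ u ∈ e, u ∈ vs
  ls_mem : ∀ l ∈ ls, loopAt l ∈ vs

namespace LGraph

variable {V L : Type}

/-- `i_E(X)`: the number of edges induced by a vertex set `X`. -/
noncomputable def iE (H : LGraph V L) (X : Finset V) : ℕ :=
  (H.es.filter fun e => ∀ u ∈ e, u ∈ X).card

/-- `i_L(X)`: the number of loops induced by a vertex set `X`. -/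
noncomputable def iL (H : LGraph V L) (X : Finset V) : ℕ :=
  (H.ls.filter fun l => H.loopAt l ∈ X).card

/-- `i_{E+L}(X)`: the number of edges and loops induced by a vertex set `X`. -/
noncomputable def iEL (H : LGraph V L) (X : Finset V) : ℕ :=
  H.iE X + H.iL X

/-- `G` is sparse if `|E'| + |L'| ≤ 2|V'|` for all subgraphs and `|E'| ≤ 2|V'| - 3` for all
loopless subgraphs with at least one edge (formulated via induced counts). -/
def Sparse (H : LGraph V L) : Prop :=
  (∀ X ⊆ H.vs, H.iEL X ≤ 2 * X.card) ∧
  (∀ X ⊆ H.vs, 0 < H.iE X → H.iE X + 3 ≤ 2 * X.card)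

/-- `G` is tight if it is sparse and `|E| + |L| = 2|V|`. -/
def Tight (H : LGraph V L) : Prop :=
  H.Sparse ∧ H.es.card + H.ls.card = 2 * H.vs.card

/-- `k_X = 2|X| - i_{E+L}(X)`. -/
noncomputable def kval (H : LGraph V L) (X : Finset V) : ℤ :=
  2 * (X.card : ℤ) - (H.iEL X : ℤ)

/-- `k̄_X = 2|X| - i_E(X)`. -/
noncomputable def kbar (H : LGraph V L) (X : Finset V) : ℤ :=
  2 * (X.card : ℤ) - (H.iE X : ℤ)

/-- `d(A,B)`: the number of edges with one endpoint in `A \ B` and the other in `B \ A`. -/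
noncomputable def dAB (H : LGraph V L) (A B : Finset V) : ℕ :=
  (H.es.filter fun e =>
    ∃ a ∈ e, ∃ b ∈ e, a ≠ b ∧ (a ∈ A ∧ a ∉ B) ∧ (b ∈ B ∧ b ∉ A)).card

/-- `X` is `k`-critical if `i_{E+L}(X) = 2|X| - k`. -/
def kCrit (H : LGraph V L) (k : ℕ) (X : Finset V) : Prop :=
  X ⊆ H.vs ∧ H.iEL X + k = 2 * X.card

/-- `X` is `k`-edge-critical if `i_E(X) = 2|X| - k`. -/
def kEdgeCrit (H : LGraph V L) (k : ℕ) (X : Finset V) : Prop :=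
  X ⊆ H.vs ∧ H.iE X + k = 2 * X.card

/-- The edges incident to a vertex `v`. -/
noncomputable def edgesAt (H : LGraph V L) (v : V) : Finset (Sym2 V) :=
  H.es.filter fun e => v ∈ e

/-- The loops incident to a vertex `v`. -/
noncomputable def loopsAt (H : LGraph V L) (v : V) : Finset L :=
  H.ls.filter fun l => H.loopAt l = v

/-- The set `N(v)` of neighbours of a vertex `v`. -/
noncomputable def nbrs (H : LGraph V L) (v : V) : Finset V :=
  H.vs.filter fun u => s(v, u) ∈ H.es

end LGraph

/-- A `Γ`-symmetric structure on a looped simple graph: an action of `Γ` by automorphisms,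
i.e. compatible permutations of vertices and loops preserving edge and loop incidences,
such that a loop may only be fixed by elements of order at most 2. -/
structure LAction (Γ : Type) [Group Γ] {V L : Type} (H : LGraph V L) where
  toV : Γ →* Equiv.Perm V
  toL : Γ →* Equiv.Perm L
  vs_inv : ∀ (γ : Γ), ∀ u ∈ H.vs, toV γ u ∈ H.vs
  es_inv : ∀ (γ : Γ), ∀ e ∈ H.es, Sym2.map (toV γ) e ∈ H.es
  ls_inv : ∀ (γ : Γ), ∀ l ∈ H.ls, toL γ l ∈ H.ls
  loop_compat : ∀ (γ : Γ), ∀ l ∈ H.ls, H.loopAt (toL γ l) = toV γ (H.loopAt l)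
  loop_fix_order : ∀ (γ : Γ), ∀ l ∈ H.ls, toL γ l = l → γ * γ = 1

section Symmetry

variable {Γ V L : Type} [Group Γ] {H : LGraph V L}

/-- The vertices fixed by the group element `γ`. -/
noncomputable def fixedV (act : LAction Γ H) (γ : Γ) : Finset V :=
  H.vs.filter fun u => act.toV γ u = u

/-- The edges fixed by the group element `γ`. -/
noncomputable def fixedE (act : LAction Γ H) (γ : Γ) : Finset (Sym2 V) :=
  H.es.filter fun e => Sym2.map (act.toV γ) e = e

/-- The loops fixed by the group element `γ`. -/
noncomputable def fixedL (act : LAction Γ H) (γ : Γ) : Finset L :=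
  H.ls.filter fun l => act.toL γ l = l

/-- No vertex, edge or loop is fixed by any non-identity element. -/
def NoFixAll (act : LAction Γ H) : Prop :=
  ∀ γ : Γ, γ ≠ 1 → fixedV act γ = ∅ ∧ fixedE act γ = ∅ ∧ fixedL act γ = ∅

/-- The fixed-element condition for the group `C₂`: either nothing is fixed by the
non-trivial element, or exactly one vertex, no edge and exactly two loops are fixed. -/
def C2Cond (act : LAction Γ H) : Prop :=
  NoFixAll act ∨
    ∀ γ : Γ, γ ≠ 1 →
      (fixedV act γ).card = 1 ∧ fixedE act γ = ∅ ∧ (fixedL act γ).card = 2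

/-- The fixed-element condition for the group `C₄` with generator `g`. -/
def C4Cond (act : LAction Γ H) (g : Γ) : Prop :=
  NoFixAll act ∨
    ((H.vs.filter fun u => ∀ γ : Γ, act.toV γ u = u).card = 1 ∧
      (∀ γ : Γ, γ ≠ 1 → fixedE act γ = ∅) ∧
      (fixedL act (g * g)).card = 2 ∧
      fixedL act g = ∅ ∧ fixedL act (g * g * g) = ∅)

/-- `(G,φ)` is `C₂`-tight. -/
def C2Tight (act : LAction Γ H) : Prop :=
  H.Tight ∧ C2Cond act

/-- `(G,φ)` is `Cₙ`-tight for `n ≥ 3`, `n ≠ 4`: tight and nothing is fixed by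
non-identity elements. -/
def CnTightOdd (act : LAction Γ H) : Prop :=
  H.Tight ∧ NoFixAll act

/-- `(G,φ)` is `Cₙ`-tight, where `g` is a generator of the cyclic group `Γ` of order `n`. -/
def CnTightFull (n : ℕ) (act : LAction Γ H) (g : Γ) : Prop :=
  H.Tight ∧ (n = 2 → C2Cond act) ∧ (n = 4 → C4Cond act g) ∧
    (n ≠ 2 → n ≠ 4 → NoFixAll act)

end Symmetry

/-!
Deleting a vertex set `O` from a sparse graph leaves a sparse graph, and removes at most
`∑_{u ∈ O} deg u` edges and loops. The orbit of `v` consists of vertices of the same degree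
as `v`, namely `2`, so at most `2|O|` elements are removed, while sparsity of the remaining
graph bounds its count by `2|V \ O|`. Since the count started at `2|V|`, both bounds are
attained and the remaining graph is tight. The action restricts to it because the deleted
set is an orbit, and fixed-point freeness is inherited.
-/

namespace LGraph

variable {V L : Type} (H : LGraph V L)

/-- A loop counts once. -/
noncomputable def degree (u : V) : ℕ :=
  (H.edgesAt u).card + (H.loopsAt u).card

noncomputable def deleteVerts (O : Finset V) : LGraph V L where
  vs := H.vs \ O
  es := H.es.filter fun e => ∀ u ∈ e, u ∉ O
  ls := H.ls.filter fun l => H.loopAt l ∉ O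
  loopAt := H.loopAt
  es_not_diag e he := H.es_not_diag e (mem_filter.1 he).1
  es_mem e he u hu := mem_sdiff.2 ⟨H.es_mem e (mem_filter.1 he).1 u hu, (mem_filter.1 he).2 u hu⟩
  ls_mem l hl := mem_sdiff.2 ⟨H.ls_mem l (mem_filter.1 hl).1, (mem_filter.1 hl).2⟩

lemma iEL_vs : H.iEL H.vs = H.es.card + H.ls.card := by
  rw [iEL, iE, iL, filter_true_of_mem fun e he => H.es_mem e he,
    filter_true_of_mem fun l hl => H.ls_mem l hl]

lemma Sparse.card_le {H : LGraph V L} (hH : H.Sparse) : H.es.card + H.ls.card ≤ 2 * H.vs.card :=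
  H.iEL_vs ▸ hH.1 H.vs Subset.rfl

variable {H} {O X : Finset V}

lemma iE_deleteVerts (hX : Disjoint X O) : (H.deleteVerts O).iE X = H.iE X := by
  rw [iE, iE, deleteVerts, filter_filter]
  exact congrArg card <| filter_congr fun e _ =>
    ⟨And.right, fun h => ⟨fun u hu => disjoint_left.1 hX (h u hu), h⟩⟩

lemma iL_deleteVerts (hX : Disjoint X O) : (H.deleteVerts O).iL X = H.iL X := by
  rw [iL, iL, deleteVerts, filter_filter]
  exact congrArg card <| filter_congr fun l _ =>
    ⟨And.right, fun h => ⟨disjoint_left.1 hX h, h⟩⟩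

lemma Sparse.deleteVerts (hH : H.Sparse) (O : Finset V) : (H.deleteVerts O).Sparse := by
  have hsub : ∀ X ⊆ (H.deleteVerts O).vs, Disjoint X O ∧ X ⊆ H.vs := fun X hX =>
    ⟨disjoint_of_subset_left hX sdiff_disjoint, hX.trans sdiff_subset⟩
  refine ⟨fun X hX => ?_, fun X hX hpos => ?_⟩ <;> obtain ⟨hXO, hXH⟩ := hsub X hX
  · rw [iEL, iE_deleteVerts hXO, iL_deleteVerts hXO]
    exact hH.1 X hXH
  · rw [iE_deleteVerts hXO] at hpos ⊢
    exact hH.2 X hXH hpos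

variable (H O)

lemma card_es_le_deleteVerts :
    H.es.card ≤ (H.deleteVerts O).es.card + ∑ u ∈ O, (H.edgesAt u).card := by
  calc H.es.card
      = (H.deleteVerts O).es.card + (H.es.filter fun e => ¬ ∀ u ∈ e, u ∉ O).card :=
        (card_filter_add_card_filter_not _).symm
    _ ≤ (H.deleteVerts O).es.card + (O.biUnion H.edgesAt).card := by
        gcongr
        intro e he
        obtain ⟨he, u, hue, huO⟩ : e ∈ H.es ∧ ∃ u ∈ e, u ∈ O := by simpa using he
        exact mem_biUnion.2 ⟨u, huO, mem_filter.2 ⟨he, hue⟩⟩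
    _ ≤ _ := by gcongr; exact card_biUnion_le

lemma card_ls_le_deleteVerts :
    H.ls.card ≤ (H.deleteVerts O).ls.card + ∑ u ∈ O, (H.loopsAt u).card := by
  calc H.ls.card
      = (H.deleteVerts O).ls.card + (H.ls.filter fun l => ¬ H.loopAt l ∉ O).card :=
        (card_filter_add_card_filter_not _).symm
    _ ≤ (H.deleteVerts O).ls.card + (O.biUnion H.loopsAt).card := by
        gcongr
        intro l hl
        rw [mem_filter, not_not] at hl
        exact mem_biUnion.2 ⟨H.loopAt l, hl.2, mem_filter.2 ⟨hl.1, rfl⟩⟩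
    _ ≤ _ := by gcongr; exact card_biUnion_le

variable {H O}

lemma Tight.deleteVerts (hH : H.Tight) (hO : O ⊆ H.vs) (hdeg : ∀ u ∈ O, H.degree u ≤ 2) :
    (H.deleteVerts O).Tight := by
  have hsparse := hH.1.deleteVerts O
  refine ⟨hsparse, le_antisymm hsparse.card_le ?_⟩
  have hremoved : ∑ u ∈ O, H.degree u ≤ 2 * O.card := by
    simpa [mul_comm] using sum_le_sum hdeg
  have hsplit : (H.vs \ O).card + O.card = H.vs.card := card_sdiff_add_card_eq_card hO
  have hE := H.card_es_le_deleteVerts O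
  have hL := H.card_ls_le_deleteVerts O
  simp only [degree, sum_add_distrib] at hremoved
  change 2 * (H.vs \ O).card ≤ _
  linarith [hH.2]

end LGraph

namespace LAction

variable {Γ V L : Type} [Group Γ] {H : LGraph V L} (act : LAction Γ H)

@[simp]
lemma toV_inv_apply_toV (γ : Γ) (u : V) : act.toV γ⁻¹ (act.toV γ u) = u := by
  simp [map_inv]

lemma card_edgesAt_le (γ : Γ) (u : V) :
    (H.edgesAt u).card ≤ (H.edgesAt (act.toV γ u)).card := by
  refine card_le_card_of_injOn (Sym2.map (act.toV γ)) (fun e he => ?_)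
    (Sym2.map.injective (act.toV γ).injective).injOn
  obtain ⟨he, hue⟩ := mem_filter.1 he
  exact mem_filter.2 ⟨act.es_inv γ e he, Sym2.mem_map.2 ⟨u, hue, rfl⟩⟩

lemma card_loopsAt_le (γ : Γ) (u : V) :
    (H.loopsAt u).card ≤ (H.loopsAt (act.toV γ u)).card := by
  refine card_le_card_of_injOn (act.toL γ) (fun l hl => ?_) (act.toL γ).injective.injOn
  obtain ⟨hls, rfl⟩ := mem_filter.1 hl
  exact mem_filter.2 ⟨act.ls_inv γ l hls, act.loop_compat γ l hls⟩

lemma degree_toV (γ : Γ) (u : V) : H.degree (act.toV γ u) = H.degree u := by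
  refine le_antisymm ?_ (add_le_add (act.card_edgesAt_le γ u) (act.card_loopsAt_le γ u))
  have hE := act.card_edgesAt_le γ⁻¹ (act.toV γ u)
  have hL := act.card_loopsAt_le γ⁻¹ (act.toV γ u)
  rw [toV_inv_apply_toV] at hE hL
  exact add_le_add hE hL

def restrict (O : Finset V) (hO : ∀ γ : Γ, ∀ u ∈ O, act.toV γ u ∈ O) :
    LAction Γ (H.deleteVerts O) where
  toV := act.toV
  toL := act.toL
  vs_inv γ u hu := mem_sdiff.2 ⟨act.vs_inv γ u (mem_sdiff.1 hu).1,
    fun h => (mem_sdiff.1 hu).2 (by simpa using hO γ⁻¹ _ h)⟩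
  es_inv γ e he := by
    obtain ⟨he, heO⟩ := mem_filter.1 he
    refine mem_filter.2 ⟨act.es_inv γ e he, fun w hw hwO => ?_⟩
    obtain ⟨u, hue, rfl⟩ := Sym2.mem_map.1 hw
    exact heO u hue (by simpa using hO γ⁻¹ _ hwO)
  ls_inv γ l hl := by
    obtain ⟨hl, hlO⟩ := mem_filter.1 hl
    refine mem_filter.2 ⟨act.ls_inv γ l hl, fun h => hlO ?_⟩
    rw [act.loop_compat γ l hl] at h
    simpa using hO γ⁻¹ _ h
  loop_compat γ l hl := act.loop_compat γ l (mem_filter.1 hl).1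
  loop_fix_order γ l hl := act.loop_fix_order γ l (mem_filter.1 hl).1

lemma noFixAll_restrict (h : NoFixAll act) (O : Finset V)
    (hO : ∀ γ : Γ, ∀ u ∈ O, act.toV γ u ∈ O) : NoFixAll (act.restrict O hO) := by
  intro γ hγ
  obtain ⟨hV, hE, hL⟩ := h γ hγ
  refine ⟨subset_empty.1 ?_, subset_empty.1 ?_, subset_empty.1 ?_⟩
  · exact hV ▸ monotone_filter_left _ sdiff_subset
  · exact hE ▸ monotone_filter_left _ (filter_subset _ _)
  · exact hL ▸ monotone_filter_left _ (filter_subset _ _)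

variable [Fintype Γ]

noncomputable def orbit (v : V) : Finset V :=
  univ.image fun γ : Γ => act.toV γ v

lemma orbit_subset_vs {v : V} (hv : v ∈ H.vs) : act.orbit v ⊆ H.vs := by
  intro u hu
  obtain ⟨γ, -, rfl⟩ := mem_image.1 hu
  exact act.vs_inv γ v hv

lemma toV_mem_orbit (v : V) (γ : Γ) : ∀ u ∈ act.orbit v, act.toV γ u ∈ act.orbit v := by
  intro u hu
  obtain ⟨δ, -, rfl⟩ := mem_image.1 hu
  exact mem_image.2 ⟨γ * δ, mem_univ _, by rw [map_mul]; rfl⟩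

lemma degree_of_mem_orbit {v u : V} (hu : u ∈ act.orbit v) : H.degree u = H.degree v := by
  obtain ⟨γ, -, rfl⟩ := mem_image.1 hu
  exact act.degree_toV γ v

end LAction

theorem statement17_general {Γ V L : Type} [Group Γ] [Fintype Γ]
    (H : LGraph V L) (act : LAction Γ H) (htight : CnTightOdd act)
    (v : V) (hv : v ∈ H.vs)
    (hdeg : ((H.edgesAt v).card = 2 ∧ (H.loopsAt v).card = 0) ∨
            ((H.edgesAt v).card = 1 ∧ (H.loopsAt v).card = 1)) :
    ∃ H' : LGraph V L,
      H'.vs = H.vs \ Finset.image (fun γ : Γ => act.toV γ v) Finset.univ ∧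
      H'.es = (H.es.filter fun e =>
        ∀ u ∈ e, u ∉ Finset.image (fun γ : Γ => act.toV γ v) Finset.univ) ∧
      H'.ls = (H.ls.filter fun l =>
        H.loopAt l ∉ Finset.image (fun γ : Γ => act.toV γ v) Finset.univ) ∧
      (∀ l ∈ H'.ls, H'.loopAt l = H.loopAt l) ∧
      ∃ act' : LAction Γ H', act'.toV = act.toV ∧ act'.toL = act.toL ∧ CnTightOdd act' := by
  obtain ⟨hH, hfix⟩ := htight
  have hdeg_v : H.degree v = 2 := by
    rcases hdeg with ⟨hE, hL⟩ | ⟨hE, hL⟩ <;> simp [LGraph.degree, hE, hL]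
  have hdeg_orbit : ∀ u ∈ act.orbit v, H.degree u ≤ 2 := fun u hu =>
    ((act.degree_of_mem_orbit hu).trans hdeg_v).le
  refine ⟨H.deleteVerts (act.orbit v), rfl, rfl, rfl, fun _ _ => rfl,
    act.restrict _ (act.toV_mem_orbit v), rfl, rfl,
    hH.deleteVerts (act.orbit_subset_vs hv) hdeg_orbit, act.noFixAll_restrict hfix _ _⟩

/-- for odd `n ≥ 3`, in a `Cₙ`-tight graph, deleting the full vertex orbit of
a vertex `v` incident to exactly two elements of `E ∪ L` gives a `Cₙ`-tight graph with the
induced action. -/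
theorem statement17 {Γ V L : Type} [Group Γ] [Fintype Γ] (n : ℕ) (hn : 3 ≤ n)
    (hodd : Odd n) (g : Γ) (hord : orderOf g = n) (hgen : ∀ x : Γ, x ∈ Subgroup.zpowers g)
    (H : LGraph V L) (act : LAction Γ H) (htight : CnTightOdd act)
    (v : V) (hv : v ∈ H.vs)
    (hdeg : ((H.edgesAt v).card = 2 ∧ (H.loopsAt v).card = 0) ∨
            ((H.edgesAt v).card = 1 ∧ (H.loopsAt v).card = 1)) :
    ∃ H' : LGraph V L,
      H'.vs = H.vs \ Finset.image (fun γ : Γ => act.toV γ v) Finset.univ ∧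
      H'.es = (H.es.filter fun e =>
        ∀ u ∈ e, u ∉ Finset.image (fun γ : Γ => act.toV γ v) Finset.univ) ∧
      H'.ls = (H.ls.filter fun l =>
        H.loopAt l ∉ Finset.image (fun γ : Γ => act.toV γ v) Finset.univ) ∧
      (∀ l ∈ H'.ls, H'.loopAt l = H.loopAt l) ∧
      ∃ act' : LAction Γ H', act'.toV = act.toV ∧ act'.toL = act.toL ∧ CnTightOdd act' :=
  statement17_general H act htight v hv hdeg
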